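/- arXiv:2310.06944 — 2 statements merged into one kernel-verified Lean document; each statement's English description precedes it below -/
import Mathlib

section
/- Let V be an invertible, strongly right distributive hypervector space over K. If (G,C) and (H,C) are bipolar fuzzy soft hypervector spaces of V, then for every nonzero b ∈ K, b∘((G,C)+(H,C)) = b∘(G,C) + b∘(H,C); that is, for all e ∈ C and x ∈ V, (b∘(G+H))_e^+(x) = (b∘G + b∘H)_e^+(x) and (b∘(G+H))_e^-(x) = (b∘G + b∘H)_e^-(x). -/
open Set Classical

variable {K V E : Type*}

/-- A hypervector space (Scafati-Tallini): an abelian group `V` over a field `K`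
with an external hyperoperation satisfying (H1)-(H5). -/
structure HVS (K V : Type*) [Field K] [AddCommGroup V] where
  ho : K → V → Set V
  ho_nonempty : ∀ b y, (ho b y).Nonempty
  h1 : ∀ b (y z : V), ho b (y + z) ⊆ Set.image2 (· + ·) (ho b y) (ho b z)
  h2 : ∀ (b c : K) (y : V), ho (b + c) y ⊆ Set.image2 (· + ·) (ho b y) (ho c y)
  h3 : ∀ (b c : K) (y : V), (⋃ p ∈ ho c y, ho b p) = ho (b * c) y
  h4a : ∀ (b : K) (y : V), ho b (-y) = ho (-b) y
  h4b : ∀ (b : K) (y : V), ho (-b) y = -(ho b y)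
  h5 : ∀ y : V, y ∈ ho 1 y

/-- `(Gp, Gm)` is a bipolar fuzzy soft set: `Gp e : V → [0,1]`, `Gm e : V → [-1,0]`. -/
def IsBFS (Gp Gm : E → V → ℝ) : Prop :=
  ∀ e x, Gp e x ∈ Set.Icc (0:ℝ) 1 ∧ Gm e x ∈ Set.Icc (-1:ℝ) 0

/-- Bipolar fuzzy soft hypervector space. -/
def IsBFSHVS [Field K] [AddCommGroup V] (H : HVS K V) (Gp Gm : E → V → ℝ) : Prop :=
  (∀ e (y z : V), min (Gp e y) (Gp e z) ≤ Gp e (y - z)) ∧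
  (∀ e (y z : V), Gm e (y - z) ≤ max (Gm e y) (Gm e z)) ∧
  (∀ e (b : K) (y : V), Gp e y ≤ sInf (Gp e '' H.ho b y)) ∧
  (∀ e (b : K) (y : V), sSup (Gm e '' H.ho b y) ≤ Gm e y)

/-- Positive part of the sum of two bipolar fuzzy soft sets. -/
noncomputable def sumP [AddCommGroup V] (Fp Hp : E → V → ℝ) (e : E) (x : V) : ℝ :=
  sSup {t | ∃ y z : V, y + z = x ∧ t = min (Fp e y) (Hp e z)}

/-- Negative part of the sum of two bipolar fuzzy soft sets. -/
noncomputable def sumM [AddCommGroup V] (Fm Hm : E → V → ℝ) (e : E) (x : V) : ℝ :=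
  sInf {t | ∃ y z : V, y + z = x ∧ t = max (Fm e y) (Hm e z)}

/-- Positive part of the scalar product `b ∘ G` (real `sSup` gives `0` on the empty set). -/
noncomputable def smulP [Field K] [AddCommGroup V] (H : HVS K V) (b : K)
    (Gp : E → V → ℝ) (e : E) (x : V) : ℝ :=
  sSup {t | ∃ r : V, x ∈ H.ho b r ∧ t = Gp e r}

/-- Negative part of the scalar product `b ∘ G` (real `sInf` gives `0` on the empty set). -/
noncomputable def smulM [Field K] [AddCommGroup V] (H : HVS K V) (b : K)
    (Gm : E → V → ℝ) (e : E) (x : V) : ℝ :=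
  sInf {t | ∃ r : V, x ∈ H.ho b r ∧ t = Gm e r}

/-- Closure conditions of a subhyperspace (the empty set vacuously satisfies them). -/
def IsSHS [Field K] [AddCommGroup V] (H : HVS K V) (W : Set V) : Prop :=
  (∀ x ∈ W, ∀ y ∈ W, x - y ∈ W) ∧ ∀ x ∈ W, ∀ b : K, H.ho b x ⊆ W

/-!
Strong right distributivity says that `x ∈ b ∘ (y + z)` exactly when `x = u + v` with `u ∈ b ∘ y`
and `v ∈ b ∘ z`. Unfolding the suprema, `(b ∘ (G + H))⁺ x ≤ c` and `(b ∘ G + b ∘ H)⁺ x ≤ c` both say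
that `min (G⁺ y) (H⁺ z) ≤ c` whenever `x ∈ b ∘ (y + z)`, so the two sides agree. For `b ≠ 0` every
`x` lies in some `b ∘ r` (as `x ∈ b ∘ (b⁻¹ ∘ x)`), so no supremum is taken over the empty set.
The negative parts are the positive parts of `-G⁻` and `-H⁻`.
-/

section

variable [AddCommGroup V]

theorem sumP_le_iff {F G : E → V → ℝ} {e : E} (hF : BddAbove (range (F e))) (x : V) (c : ℝ) :
    sumP F G e x ≤ c ↔ ∀ y z, y + z = x → min (F e y) (G e z) ≤ c := by
  obtain ⟨d, hd⟩ := hF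
  have hbdd : BddAbove {t | ∃ y z : V, y + z = x ∧ t = min (F e y) (G e z)} :=
    ⟨d, by rintro _ ⟨y, z, -, rfl⟩; exact (min_le_left _ _).trans (hd (mem_range_self y))⟩
  rw [sumP, csSup_le_iff hbdd ⟨_, x, 0, add_zero x, rfl⟩]
  exact ⟨fun h y z hyz => h _ ⟨y, z, hyz, rfl⟩, by rintro h _ ⟨y, z, hyz, rfl⟩; exact h y z hyz⟩

theorem bddAbove_range_sumP {F G : E → V → ℝ} {e : E} (hF : BddAbove (range (F e))) :
    BddAbove (range (sumP F G e)) := by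
  obtain ⟨d, hd⟩ := hF
  exact ⟨d, forall_mem_range.2 fun x => (sumP_le_iff ⟨d, hd⟩ x d).2
    fun y _ _ => (min_le_left _ _).trans (hd (mem_range_self y))⟩

theorem neg_sumM (F G : E → V → ℝ) : -sumM F G = sumP (-F) (-G) := by
  funext e x
  simp only [Pi.neg_apply, sumM, sumP, Real.sInf_def, neg_neg]
  congr 1
  ext t
  simp [neg_eq_iff_eq_neg, min_neg_neg]

end

namespace HVS

variable [Field K] [AddCommGroup V] (H : HVS K V)

theorem exists_mem_ho_of_ne_zero {b : K} (hb : b ≠ 0) (x : V) : ∃ r, x ∈ H.ho b r := by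
  have hx : x ∈ H.ho (b * b⁻¹) x := by rw [mul_inv_cancel₀ hb]; exact H.h5 x
  rw [← H.h3] at hx
  obtain ⟨r, -, hr⟩ := mem_iUnion₂.mp hx
  exact ⟨r, hr⟩

end HVS

section

variable [Field K] [AddCommGroup V] (H : HVS K V) {b : K}

theorem smulP_le_iff (hb : b ≠ 0) {F : E → V → ℝ} {e : E} (hF : BddAbove (range (F e)))
    (x : V) (c : ℝ) : smulP H b F e x ≤ c ↔ ∀ r, x ∈ H.ho b r → F e r ≤ c := by
  obtain ⟨r, hr⟩ := H.exists_mem_ho_of_ne_zero hb x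
  have hbdd : BddAbove {t | ∃ r : V, x ∈ H.ho b r ∧ t = F e r} :=
    hF.mono (by rintro _ ⟨r, -, rfl⟩; exact mem_range_self r)
  rw [smulP, csSup_le_iff hbdd ⟨_, r, hr, rfl⟩]
  exact ⟨fun h r hr => h _ ⟨r, hr, rfl⟩, by rintro h _ ⟨r, hr, rfl⟩; exact h r hr⟩

theorem bddAbove_range_smulP (hb : b ≠ 0) {F : E → V → ℝ} {e : E} (hF : BddAbove (range (F e))) :
    BddAbove (range (smulP H b F e)) := by
  obtain ⟨d, hd⟩ := hF
  exact ⟨d, forall_mem_range.2 fun x => (smulP_le_iff H hb ⟨d, hd⟩ x d).2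
    fun r _ => hd (mem_range_self r)⟩

theorem smulP_sumP (hb : b ≠ 0)
    (hsrd : ∀ y z : V, H.ho b (y + z) = image2 (· + ·) (H.ho b y) (H.ho b z))
    {F G : E → V → ℝ} (hF : ∀ e, BddAbove (range (F e))) (hG : ∀ e, BddAbove (range (G e))) :
    smulP H b (sumP F G) = sumP (smulP H b F) (smulP H b G) := by
  funext e x
  refine eq_of_forall_ge_iff fun c => ?_
  have hL : smulP H b (sumP F G) e x ≤ c ↔
      ∀ y z, x ∈ H.ho b (y + z) → min (F e y) (G e z) ≤ c := by
    simp only [smulP_le_iff H hb (bddAbove_range_sumP (hF e)), sumP_le_iff (hF e)]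
    exact ⟨fun h y z hx => h _ hx y z rfl, by rintro h _ hx y z rfl; exact h y z hx⟩
  have hR : sumP (smulP H b F) (smulP H b G) e x ≤ c ↔
      ∀ y z, x ∈ H.ho b (y + z) → min (F e y) (G e z) ≤ c := by
    simp only [sumP_le_iff (bddAbove_range_smulP H hb (hF e)), min_le_iff,
      smulP_le_iff H hb (hF e), smulP_le_iff H hb (hG e), hsrd, mem_image2]
    refine ⟨fun h y z ⟨u, hu, v, hv, huv⟩ => (h u v huv).imp (· y hu) (· z hv), ?_⟩
    intro h u v huv
    rw [or_iff_not_imp_left]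
    push Not
    rintro ⟨y, hy, hFy⟩ z hz
    exact (h y z ⟨u, hy, v, hz, huv⟩).resolve_left hFy.not_ge
  rw [hL, hR]

theorem neg_smulM (F : E → V → ℝ) : -smulM H b F = smulP H b (-F) := by
  funext e x
  simp only [Pi.neg_apply, smulM, smulP, Real.sInf_def, neg_neg]
  congr 1
  ext t
  simp [neg_eq_iff_eq_neg]

theorem smulM_sumM (hb : b ≠ 0)
    (hsrd : ∀ y z : V, H.ho b (y + z) = image2 (· + ·) (H.ho b y) (H.ho b z))
    {F G : E → V → ℝ} (hF : ∀ e, BddBelow (range (F e))) (hG : ∀ e, BddBelow (range (G e))) :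
    smulM H b (sumM F G) = sumM (smulM H b F) (smulM H b G) := by
  have neg_bddAbove {f : E → V → ℝ} (hf : ∀ e, BddBelow (range (f e))) e :
      BddAbove (range ((-f) e)) := by
    obtain ⟨d, hd⟩ := hf e
    exact ⟨-d, forall_mem_range.2 fun y => neg_le_neg (hd (mem_range_self y))⟩
  apply neg_injective
  rw [neg_smulM, neg_sumM, smulP_sumP H hb hsrd (neg_bddAbove hF) (neg_bddAbove hG), neg_sumM,
    neg_smulM, neg_smulM]

end

theorem IsBFS.bddAbove_range {Gp Gm : E → V → ℝ} (h : IsBFS Gp Gm) (e : E) :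
    BddAbove (range (Gp e)) :=
  ⟨1, forall_mem_range.2 fun x => (h e x).1.2⟩

theorem IsBFS.bddBelow_range {Gp Gm : E → V → ℝ} (h : IsBFS Gp Gm) (e : E) :
    BddBelow (range (Gm e)) :=
  ⟨-1, forall_mem_range.2 fun x => (h e x).2.1⟩

theorem stmt_5_general [Field K] [AddCommGroup V] (H : HVS K V)
    (hsrd : ∀ (b : K) (y z : V), H.ho b (y + z) = Set.image2 (· + ·) (H.ho b y) (H.ho b z))
    (Gp Gm Hp Hm : E → V → ℝ) (hbG : IsBFS Gp Gm) (hbH : IsBFS Hp Hm) :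
    ∀ b : K, b ≠ 0 → ∀ (e : E) (x : V),
      smulP H b (sumP Gp Hp) e x = sumP (smulP H b Gp) (smulP H b Hp) e x ∧
      smulM H b (sumM Gm Hm) e x = sumM (smulM H b Gm) (smulM H b Hm) e x := by
  intro b hb e x
  rw [smulP_sumP H hb (hsrd b) hbG.bddAbove_range hbH.bddAbove_range,
    smulM_sumM H hb (hsrd b) hbG.bddBelow_range hbH.bddBelow_range]
  exact ⟨rfl, rfl⟩

theorem stmt_5 [Field K] [AddCommGroup V] (H : HVS K V)
    (hinv : ∀ b : K, b ≠ 0 → ∀ x y : V, x ∈ H.ho b y → y ∈ H.ho b⁻¹ x)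
    (hsrd : ∀ (b : K) (y z : V), H.ho b (y + z) = Set.image2 (· + ·) (H.ho b y) (H.ho b z))
    (Gp Gm Hp Hm : E → V → ℝ) (hbG : IsBFS Gp Gm) (hbH : IsBFS Hp Hm)
    (hG : IsBFSHVS H Gp Gm) (hH : IsBFSHVS H Hp Hm) :
    ∀ b : K, b ≠ 0 → ∀ (e : E) (x : V),
      smulP H b (sumP Gp Hp) e x = sumP (smulP H b Gp) (smulP H b Hp) e x ∧
      smulM H b (sumM Gm Hm) e x = sumM (smulM H b Gm) (smulM H b Hm) e x :=
  stmt_5_general H hsrd Gp Gm Hp Hm hbG hbH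
end

section
/- Let V be a strongly left distributive hypervector space over K and (G,B) a bipolar fuzzy soft set of V. Then (G,B) is a bipolar fuzzy soft hypervector space of V if and only if for all b,c ∈ K, e ∈ B and x ∈ V: (b∘G + c∘G)_e^+(x) ≤ G_e^+(x) and (b∘G + c∘G)_e^-(x) ≥ G_e^-(x). -/
open Set Classical

variable {K V E : Type*}

/-!
Replacing the negative part `Gm` by `-Gm` turns every condition on it into the corresponding
condition on a positive part, so it suffices to treat a single fuzzy soft set `F` with values in
`[0,1]`. If `F` satisfies `min (F y) (F z) ≤ F (y - z)` and `F y ≤ F q` for `q ∈ b ∘ y`, then `F`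
is closed under `+` and `b ∘ F ≤ F`, whence `b ∘ F + c ∘ F ≤ F`. Conversely, the decompositions
`y - z = y + (-z)` with `y ∈ 1 ∘ y`, `-z ∈ (-1) ∘ z`, and `q = q + 0` with `q ∈ b ∘ y`,
`0 ∈ 0 ∘ y`, recover the two conditions from `1 ∘ F + (-1) ∘ F ≤ F` and `b ∘ F + 0 ∘ F ≤ F`.
Strong left distributivity is what puts `0 = y - y` into `0 ∘ y = 1 ∘ y + (-1) ∘ y`.
-/

section HyperVectorSpace
variable [Field K] [AddCommGroup V]

def HVS.StronglyLeftDistributive (H : HVS K V) : Prop :=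
  ∀ (b c : K) (y : V), H.ho (b + c) y = Set.image2 (· + ·) (H.ho b y) (H.ho c y)

lemma HVS.neg_mem_ho_neg_one (H : HVS K V) (y : V) : -y ∈ H.ho (-1) y := by
  rw [H.h4b]
  exact Set.neg_mem_neg.mpr (H.h5 y)

lemma HVS.zero_mem_ho_zero (H : HVS K V) (hsld : H.StronglyLeftDistributive) (y : V) :
    (0 : V) ∈ H.ho 0 y := by
  rw [← add_neg_cancel (1 : K), hsld]
  exact ⟨y, H.h5 y, -y, H.neg_mem_ho_neg_one y, add_neg_cancel y⟩

end HyperVectorSpace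

lemma min_le_apply_add_of_min_le_apply_sub {α : Type*} [AddGroup V] [LinearOrder α] {f : V → α}
    (hf : ∀ y z, min (f y) (f z) ≤ f (y - z)) (y z : V) : min (f y) (f z) ≤ f (y + z) := by
  have h_zero : ∀ y, f y ≤ f 0 := fun y => by simpa using hf y y
  have h_neg : f z ≤ f (-z) := by simpa [h_zero z] using hf 0 z
  simpa using (min_le_min_left (f y) h_neg).trans (hf y (-z))

section SumP
variable [AddCommGroup V] {F G : E → V → ℝ} {e : E}

lemma le_sumP {a : ℝ} (hF : ∀ x, F e x ≤ a) (y z : V) :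
    min (F e y) (G e z) ≤ sumP F G e (y + z) :=
  le_csSup ⟨a, by rintro t ⟨y', z', -, rfl⟩; exact (min_le_left _ _).trans (hF y')⟩
    ⟨y, z, rfl, rfl⟩

lemma sumP_le {a : ℝ} {x : V} (h : ∀ y z, y + z = x → min (F e y) (G e z) ≤ a) :
    sumP F G e x ≤ a :=
  csSup_le ⟨_, x, 0, add_zero x, rfl⟩ (by rintro t ⟨y, z, hyz, rfl⟩; exact h y z hyz)

lemma sumM_eq_neg_sumP (x : V) : sumM F G e x = -sumP (-F) (-G) e x := by
  rw [sumM, sumP, ← Real.sInf_neg]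
  congr 1
  ext t
  simp [neg_eq_iff_eq_neg, min_neg_neg]

end SumP

section SMulP
variable [Field K] [AddCommGroup V] (H : HVS K V) {F : E → V → ℝ} {b : K} {e : E} {x : V}

lemma le_smulP {r : V} (hF : ∀ x, F e x ≤ 1) (hr : x ∈ H.ho b r) : F e r ≤ smulP H b F e x :=
  le_csSup ⟨1, by rintro t ⟨s, -, rfl⟩; exact hF s⟩ ⟨r, hr, rfl⟩

lemma smulP_le {a : ℝ} (hF : ∀ r, x ∈ H.ho b r → F e r ≤ a) (ha : 0 ≤ a) :
    smulP H b F e x ≤ a :=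
  Real.sSup_le (by rintro t ⟨r, hr, rfl⟩; exact hF r hr) ha

lemma smulM_eq_neg_smulP (b : K) (F : E → V → ℝ) : smulM H b F = -smulP H b (-F) := by
  ext e x
  rw [Pi.neg_apply, Pi.neg_apply, smulM, smulP, ← Real.sInf_neg]
  congr 1
  ext t
  simp [neg_eq_iff_eq_neg]

end SMulP

section FuzzySoftHVS
variable [Field K] [AddCommGroup V] (H : HVS K V) {F : E → V → ℝ}

def IsFuzzySoftHVS (F : E → V → ℝ) : Prop :=
  (∀ e (y z : V), min (F e y) (F e z) ≤ F e (y - z)) ∧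
  ∀ e (b : K) (y : V), F e y ≤ sInf (F e '' H.ho b y)

lemma isBFSHVS_iff (Gp Gm : E → V → ℝ) :
    IsBFSHVS H Gp Gm ↔ IsFuzzySoftHVS H Gp ∧ IsFuzzySoftHVS H (-Gm) := by
  have h_image : ∀ e (S : Set V), (fun y => -Gm e y) '' S = -(Gm e '' S) := fun e S => by
    rw [← Set.image_neg_eq_neg, Set.image_image]
  simp only [IsBFSHVS, IsFuzzySoftHVS, Pi.neg_apply, h_image, Real.sInf_neg, min_neg_neg,
    neg_le_neg_iff]
  tauto

lemma IsFuzzySoftHVS.smulP_le_self (hF : IsFuzzySoftHVS H F) (h01 : ∀ e x, F e x ∈ Icc (0 : ℝ) 1)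
    (b : K) (e : E) (x : V) : smulP H b F e x ≤ F e x :=
  smulP_le H (fun r hr => (hF.2 e b r).trans
    (csInf_le ⟨0, by rintro _ ⟨s, -, rfl⟩; exact (h01 e s).1⟩ ⟨x, hr, rfl⟩)) (h01 e x).1

lemma IsFuzzySoftHVS.sumP_smulP_le (hF : IsFuzzySoftHVS H F)
    (h01 : ∀ e x, F e x ∈ Icc (0 : ℝ) 1) (b c : K) (e : E) (x : V) :
    sumP (smulP H b F) (smulP H c F) e x ≤ F e x :=
  sumP_le fun y z hyz => hyz ▸
    (min_le_min (hF.smulP_le_self H h01 b e y) (hF.smulP_le_self H h01 c e z)).trans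
      (min_le_apply_add_of_min_le_apply_sub (hF.1 e) y z)

lemma isFuzzySoftHVS_of_sumP_smulP_le (hsld : H.StronglyLeftDistributive)
    (hF1 : ∀ e x, F e x ≤ 1)
    (h : ∀ b c e x, sumP (smulP H b F) (smulP H c F) e x ≤ F e x) : IsFuzzySoftHVS H F := by
  have h_smulP_le_one : ∀ b e x, smulP H b F e x ≤ 1 :=
    fun b e x => smulP_le H (fun r _ => hF1 e r) zero_le_one
  refine ⟨fun e y z => ?_, fun e b y => ?_⟩
  · calc min (F e y) (F e z)
        ≤ min (smulP H 1 F e y) (smulP H (-1) F e (-z)) :=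
          min_le_min (le_smulP H (hF1 e) (H.h5 y)) (le_smulP H (hF1 e) (H.neg_mem_ho_neg_one z))
      _ ≤ sumP (smulP H 1 F) (smulP H (-1) F) e (y + -z) := le_sumP (h_smulP_le_one 1 e) y (-z)
      _ ≤ F e (y - z) := sub_eq_add_neg y z ▸ h 1 (-1) e (y - z)
  · refine le_csInf ((H.ho_nonempty b y).image _) ?_
    rintro _ ⟨q, hq, rfl⟩
    calc F e y
        ≤ min (smulP H b F e q) (smulP H 0 F e 0) :=
          le_min (le_smulP H (hF1 e) hq) (le_smulP H (hF1 e) (H.zero_mem_ho_zero hsld y))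
      _ ≤ sumP (smulP H b F) (smulP H 0 F) e (q + 0) := le_sumP (h_smulP_le_one b e) q 0
      _ ≤ F e q := (add_zero q).symm ▸ h b 0 e q

lemma isFuzzySoftHVS_iff_sumP_smulP_le (hsld : H.StronglyLeftDistributive)
    (h01 : ∀ e x, F e x ∈ Icc (0 : ℝ) 1) :
    IsFuzzySoftHVS H F ↔ ∀ b c e x, sumP (smulP H b F) (smulP H c F) e x ≤ F e x :=
  ⟨fun hF => hF.sumP_smulP_le H h01,
    isFuzzySoftHVS_of_sumP_smulP_le H hsld fun e x => (h01 e x).2⟩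

end FuzzySoftHVS

theorem stmt_8 [Field K] [AddCommGroup V] (H : HVS K V)
    (hsld : ∀ (b c : K) (y : V), H.ho (b + c) y = Set.image2 (· + ·) (H.ho b y) (H.ho c y))
    (Gp Gm : E → V → ℝ) (hb : IsBFS Gp Gm) :
    IsBFSHVS H Gp Gm ↔
      ∀ (b c : K) (e : E) (x : V),
        sumP (smulP H b Gp) (smulP H c Gp) e x ≤ Gp e x ∧
        Gm e x ≤ sumM (smulM H b Gm) (smulM H c Gm) e x := by
  have hGm : ∀ e x, (-Gm) e x ∈ Icc (0 : ℝ) 1 := fun e x => by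
    obtain ⟨h1, h0⟩ := (hb e x).2
    exact ⟨by simpa using h0, by simpa [neg_le] using h1⟩
  rw [isBFSHVS_iff, isFuzzySoftHVS_iff_sumP_smulP_le H hsld fun e x => (hb e x).1,
    isFuzzySoftHVS_iff_sumP_smulP_le H hsld hGm]
  simp only [smulM_eq_neg_smulP, sumM_eq_neg_sumP, neg_neg, Pi.neg_apply, le_neg, ← forall_and]
end
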